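/- arXiv:math/0608776 — 4 statements merged into one kernel-verified Lean document; each statement's English description precedes it below -/
import Mathlib

section
/- For all integers m > 1 and ν ≥ 1, the number of n-colour self-inverse compositions of 2ν−1 into exactly 2m−1 parts equals Σ_{l=1}^{ν−1} (2l−1)·C(ν+m−l−2, 2m−3). -/
/-- An n-colour composition of `ν` is a list of pairs `(p, c)` with `1 ≤ c ≤ p`
whose parts `p` sum to `ν`. -/
def IsNColourComposition (ν : ℕ) (l : List (ℕ × ℕ)) : Prop :=
  (∀ pc ∈ l, 1 ≤ pc.2 ∧ pc.2 ≤ pc.1) ∧ (l.map Prod.fst).sum = ν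

/-- Finset of n-colour compositions of `N` into exactly `k` parts. -/
def NCF : ℕ → ℕ → Finset (List (ℕ × ℕ))
  | 0, N => if N = 0 then {([] : List (ℕ × ℕ))} else ∅
  | (k+1), N => (Finset.Icc 1 N).biUnion fun p =>
      (Finset.Icc 1 p).biUnion fun c =>
        (NCF k (N - p)).image fun t => (p, c) :: t

lemma mem_NCF : ∀ (k N : ℕ) (l : List (ℕ × ℕ)),
    l ∈ NCF k N ↔ (∀ pc ∈ l, 1 ≤ pc.2 ∧ pc.2 ≤ pc.1) ∧ (l.map Prod.fst).sum = N ∧ l.length = k := by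
  intro k
  induction k with
  | zero =>
    intro N l
    constructor
    · intro h
      simp only [NCF] at h
      split at h
      · simp only [Finset.mem_singleton] at h
        subst h
        simp_all
      · simp at h
    · rintro ⟨h1, h2, h3⟩
      rw [List.length_eq_zero_iff] at h3
      subst h3
      simp at h2
      simp [NCF, ← h2]
  | succ k ih =>
    intro N l
    simp only [NCF, Finset.mem_biUnion, Finset.mem_image, Finset.mem_Icc]
    constructor
    · rintro ⟨p, ⟨hp1, hpN⟩, c, ⟨hc1, hcp⟩, t, ht, rfl⟩
      obtain ⟨ht1, ht2, ht3⟩ := (ih _ _).mp ht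
      refine ⟨?_, ?_, ?_⟩
      · rintro pc hpc
        rcases List.mem_cons.mp hpc with rfl | h
        · exact ⟨hc1, hcp⟩
        · exact ht1 _ h
      · simp [ht2]; omega
      · simp [ht3]
    · rintro ⟨h1, h2, h3⟩
      match l with
      | [] => simp at h3
      | (p, c) :: t =>
        have hpc := h1 (p, c) List.mem_cons_self
        simp only [List.map_cons, List.sum_cons] at h2
        have hts : (t.map Prod.fst).sum = N - p ∧ p ≤ N := by omega
        refine ⟨p, ⟨by omega, hts.2⟩, c, ⟨hpc.1, hpc.2⟩, t, ?_, rfl⟩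
        exact (ih _ _).mpr ⟨fun pc h => h1 pc (List.mem_cons_of_mem _ h), hts.1, by simpa using h3⟩

lemma card_NCF_succ (k N : ℕ) :
    (NCF (k+1) N).card = ∑ p ∈ Finset.Icc 1 N, p * (NCF k (N - p)).card := by
  simp only [NCF]
  rw [Finset.card_biUnion]
  · refine Finset.sum_congr rfl fun p hp => ?_
    rw [Finset.card_biUnion]
    · rw [Finset.sum_congr rfl fun c _ => Finset.card_image_of_injective _ (List.cons_injective)]
      simp [Nat.card_Icc, mul_comm]
    · intro c hc c' hc' hne
      simp only [Finset.disjoint_left, Finset.mem_image]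
      rintro x ⟨t, ht, rfl⟩ ⟨t', ht', h⟩
      apply hne
      simp only [List.cons.injEq, Prod.mk.injEq] at h
      exact h.1.2.symm
  · intro p hp p' hp' hne
    simp only [Finset.disjoint_left, Finset.mem_biUnion, Finset.mem_image]
    rintro x ⟨c, hc, t, ht, rfl⟩ ⟨c', hc', t', ht', h⟩
    apply hne
    simp only [List.cons.injEq, Prod.mk.injEq] at h
    exact h.1.1.symm

lemma sum_shift (r s : ℕ) (h : r ≤ s) (t : ℕ) :
    ∑ i ∈ Finset.range t, (i + r).choose s = (t + r).choose (s+1) := by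
  induction t with
  | zero => simp [Nat.choose_eq_zero_of_lt (by omega : r < s + 1)]
  | succ t ih =>
    rw [Finset.sum_range_succ, ih, show t + 1 + r = (t + r) + 1 by omega,
      Nat.choose_succ_succ]
    ring

lemma sum_reflect_choose (n k s : ℕ) :
    ∑ i ∈ Finset.range n, (n - 1 - i + k).choose s = ∑ i ∈ Finset.range n, (i + k).choose s :=
  Finset.sum_range_reflect (fun i => (i + k).choose s) n

lemma key (k N : ℕ) :
    ∑ p ∈ Finset.Icc 1 N, p * (N - p + k).choose (2*k+1) = (N + k + 1).choose (2*k+3) := by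
  have step1 : ∀ p ∈ Finset.Icc 1 N, p * (N - p + k).choose (2*k+1)
      = ∑ q ∈ Finset.Icc 1 N, if q ≤ p then (N - p + k).choose (2*k+1) else 0 := by
    intro p hp
    simp only [Finset.mem_Icc] at hp
    rw [← Finset.sum_filter]
    have hf : (Finset.Icc 1 N).filter (fun q => q ≤ p) = Finset.Icc 1 p := by
      ext q
      simp only [Finset.mem_filter, Finset.mem_Icc]
      omega
    rw [hf, Finset.sum_const, Nat.card_Icc, smul_eq_mul]
    congr 1
  rw [Finset.sum_congr rfl step1, Finset.sum_comm]
  have step2 : ∀ q ∈ Finset.Icc 1 N,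
      (∑ p ∈ Finset.Icc 1 N, if q ≤ p then (N - p + k).choose (2*k+1) else 0)
        = (N - q + (k+1)).choose (2*k+2) := by
    intro q hq
    simp only [Finset.mem_Icc] at hq
    rw [← Finset.sum_filter]
    have hf : (Finset.Icc 1 N).filter (fun p => q ≤ p) = Finset.Icc q N := by
      ext p
      simp only [Finset.mem_filter, Finset.mem_Icc]
      omega
    rw [hf, ← Finset.Ico_add_one_right_eq_Icc, Finset.sum_Ico_eq_sum_range]
    have h1 : ∀ i ∈ Finset.range (N + 1 - q),
        (N - (q + i) + k).choose (2*k+1) = ((N + 1 - q) - 1 - i + k).choose (2*k+1) := by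
      intro i hi
      simp only [Finset.mem_range] at hi
      congr 2
      omega
    rw [Finset.sum_congr rfl h1, sum_reflect_choose, sum_shift k (2*k+1) (by omega)]
    congr 1
    omega
  rw [Finset.sum_congr rfl step2, ← Finset.Ico_add_one_right_eq_Icc, Finset.sum_Ico_eq_sum_range]
  have h2 : ∀ i ∈ Finset.range (N + 1 - 1),
      (N - (1 + i) + (k+1)).choose (2*k+2) = ((N + 1 - 1) - 1 - i + (k+1)).choose (2*k+2) := by
    intro i hi
    simp only [Finset.mem_range] at hi
    congr 2
    omega
  rw [Finset.sum_congr rfl h2, sum_reflect_choose, sum_shift (k+1) (2*k+2) (by omega)]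
  congr 1

lemma card_NCF (k : ℕ) : ∀ N, (NCF (k+1) N).card = (N + k).choose (2*k+1) := by
  induction k with
  | zero =>
    intro N
    rw [card_NCF_succ, Finset.sum_eq_single N]
    · simp only [NCF, Nat.sub_self, if_pos rfl]
      simp
    · intro p hp hne
      simp only [Finset.mem_Icc] at hp
      simp only [NCF]
      rw [if_neg (by omega)]
      simp
    · intro h
      simp only [Finset.mem_Icc] at h
      have : N = 0 := by omega
      simp [this]
  | succ k ih =>
    intro N
    rw [card_NCF_succ]
    rw [Finset.sum_congr rfl fun p _ => by rw [ih], key k N]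
    congr 1

/-- Finset of self-inverse n-colour compositions of `2ν−1` into `2m−1` parts. -/
def SG (m ν : ℕ) : Finset (List (ℕ × ℕ)) :=
  (Finset.Icc 1 ν).biUnion fun j =>
    (Finset.Icc 1 (2*j - 1)).biUnion fun c =>
      (NCF (m-1) (ν - j)).image fun a => a ++ (2*j - 1, c) :: a.reverse

lemma card_SG (m ν : ℕ) :
    (SG m ν).card = ∑ j ∈ Finset.Icc 1 ν, (2*j - 1) * (NCF (m-1) (ν - j)).card := by
  rw [SG, Finset.card_biUnion]
  · refine Finset.sum_congr rfl fun j hj => ?_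
    rw [Finset.card_biUnion]
    · have himg : ∀ c ∈ Finset.Icc 1 (2*j-1),
          ((NCF (m-1) (ν - j)).image fun a => a ++ (2*j - 1, c) :: a.reverse).card
            = (NCF (m-1) (ν - j)).card := by
        intro c hc
        apply Finset.card_image_of_injOn
        intro a ha a' ha' h
        have la := ((mem_NCF _ _ _).mp ha).2.2
        have la' := ((mem_NCF _ _ _).mp ha').2.2
        exact (List.append_inj h (la.trans la'.symm)).1
      rw [Finset.sum_congr rfl himg, Finset.sum_const, Nat.card_Icc, smul_eq_mul]
      congr 1
    · intro c hc c' hc' hne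
      simp only [Finset.disjoint_left, Finset.mem_image]
      rintro x ⟨a, ha, rfl⟩ ⟨a', ha', h⟩
      have la := ((mem_NCF _ _ _).mp ha).2.2
      have la' := ((mem_NCF _ _ _).mp ha').2.2
      have h2 := (List.append_inj h (la'.trans la.symm)).2
      simp only [List.cons.injEq, Prod.mk.injEq] at h2
      exact hne h2.1.2.symm
  · intro j hj j' hj' hne
    simp only [Finset.mem_coe, Finset.mem_Icc] at hj hj'
    simp only [Finset.disjoint_left, Finset.mem_biUnion, Finset.mem_image, Finset.mem_Icc]
    rintro x ⟨c, hc, a, ha, rfl⟩ ⟨c', hc', a', ha', h⟩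
    have la := ((mem_NCF _ _ _).mp ha).2.2
    have la' := ((mem_NCF _ _ _).mp ha').2.2
    have h2 := (List.append_inj h (la'.trans la.symm)).2
    simp only [List.cons.injEq, Prod.mk.injEq] at h2
    obtain ⟨⟨hj12, _⟩, _⟩ := h2
    exact hne (by omega)

lemma mem_SG (m ν : ℕ) (hm : 2 ≤ m) (hν : 1 ≤ ν) (l : List (ℕ × ℕ)) :
    l ∈ SG m ν ↔ IsNColourComposition (2 * ν - 1) l ∧ l.reverse = l ∧ l.length = 2 * m - 1 := by
  constructor
  · intro h
    simp only [SG, Finset.mem_biUnion, Finset.mem_image, Finset.mem_Icc] at h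
    obtain ⟨j, hj, c, hc, a, ha, rfl⟩ := h
    obtain ⟨ha1, ha2, ha3⟩ := (mem_NCF _ _ _).mp ha
    refine ⟨⟨?_, ?_⟩, ?_, ?_⟩
    · intro pc hpc
      simp only [List.mem_append, List.mem_cons, List.mem_reverse] at hpc
      rcases hpc with h | h | h
      · exact ha1 _ h
      · subst h
        exact ⟨hc.1, hc.2⟩
      · exact ha1 _ h
    · simp only [List.map_append, List.map_cons, List.sum_append, List.sum_cons,
        List.map_reverse, List.sum_reverse]
      omega
    · simp [List.reverse_append]
    · simp only [List.length_append, List.length_cons, List.length_reverse, ha3]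
      omega
  · rintro ⟨⟨hcol, hsum⟩, hrev, hlen⟩
    obtain ⟨a, ha_def⟩ : ∃ a, a = l.take (m-1) := ⟨_, rfl⟩
    have hal : a.length = m - 1 := by
      rw [ha_def, List.length_take]
      omega
    obtain ⟨⟨m1, m2⟩, b, hd⟩ : ∃ mid b, l.drop (m-1) = mid :: b := by
      cases hdrop : l.drop (m-1) with
      | nil =>
        have := congrArg List.length hdrop
        simp only [List.length_drop, List.length_nil] at this
        omega
      | cons x xs => exact ⟨x, xs, rfl⟩
    have hl : l = a ++ (m1, m2) :: b := by
      rw [ha_def, ← hd, List.take_append_drop]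
    have hll := congrArg List.length hl
    simp only [List.length_append, List.length_cons] at hll
    have hbl : b.length = m - 1 := by omega
    have hab : b = a.reverse := by
      have h2 : a ++ (m1, m2) :: b = b.reverse ++ (m1, m2) :: a.reverse := by
        conv_lhs => rw [← hl, ← hrev, hl]
        simp [List.reverse_append]
      obtain ⟨e1, _⟩ := List.append_inj h2 (by rw [hal, List.length_reverse, hbl])
      simp [e1]
    rw [hl, hab] at hsum
    simp only [List.map_append, List.map_cons, List.sum_append, List.sum_cons,
      List.map_reverse, List.sum_reverse] at hsum
    have hmidc := hcol (m1, m2) (by rw [hl]; simp)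
    simp only at hmidc
    simp only [SG, Finset.mem_biUnion, Finset.mem_image, Finset.mem_Icc]
    refine ⟨ν - (a.map Prod.fst).sum, ⟨by omega, by omega⟩, m2, ⟨hmidc.1, by omega⟩, a, ?_, ?_⟩
    · exact (mem_NCF _ _ _).mpr
        ⟨fun pc h => hcol pc (hl ▸ List.mem_append_left _ h), by omega, hal⟩
    · rw [hl, hab]
      have hm1 : 2 * (ν - (a.map Prod.fst).sum) - 1 = m1 := by omega
      rw [hm1]

theorem selfinverse_odd_number_odd_parts (m ν : ℕ) (hm : 1 < m) (hν : 1 ≤ ν) :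
    Nat.card {l : List (ℕ × ℕ) //
        IsNColourComposition (2 * ν - 1) l ∧ l.reverse = l ∧ l.length = 2 * m - 1} =
      ∑ l ∈ Finset.Icc 1 (ν - 1), (2 * l - 1) * Nat.choose (ν + m - l - 2) (2 * m - 3) := by
  have e : ∀ l : List (ℕ × ℕ),
      (IsNColourComposition (2 * ν - 1) l ∧ l.reverse = l ∧ l.length = 2 * m - 1) ↔ l ∈ SG m ν :=
    fun l => (mem_SG m ν hm hν l).symm
  rw [Nat.card_congr (Equiv.subtypeEquivRight e), Nat.card_eq_fintype_card, Fintype.card_coe,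
    card_SG m ν]
  have hm1 : m - 1 = (m - 2) + 1 := by omega
  rw [hm1]
  have step : ∀ j ∈ Finset.Icc 1 ν, (2*j - 1) * (NCF ((m-2)+1) (ν - j)).card
      = (2*j - 1) * ((ν - j) + (m-2)).choose (2*m-3) := by
    intro j hj
    rw [card_NCF, show 2*(m-2)+1 = 2*m-3 from by omega]
  rw [Finset.sum_congr rfl step]
  obtain ⟨ν', rfl⟩ : ∃ ν', ν = ν' + 1 := ⟨ν - 1, by omega⟩
  rw [Finset.sum_Icc_succ_top (by omega : 1 ≤ ν' + 1)]
  have hz : (2*(ν'+1) - 1) * ((ν'+1 - (ν'+1)) + (m-2)).choose (2*m-3) = 0 := by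
    rw [Nat.sub_self, Nat.zero_add, Nat.choose_eq_zero_of_lt (by omega), mul_zero]
  rw [hz, add_zero]
  simp only [Nat.add_sub_cancel]
  refine Finset.sum_congr rfl fun j hj => ?_
  simp only [Finset.mem_Icc] at hj
  have harg : ν' + 1 - j + (m-2) = ν' + 1 + m - j - 2 := by omega
  rw [harg]
end

section
/- For all integers m ≥ 1 and ν ≥ 1, the number of n-colour self-inverse compositions of 2ν into exactly 2m parts equals the binomial coefficient C(ν+m−1, 2m−1). -/
open Finset

/-- The finset of n-colour compositions of `ν` into exactly `m` parts. -/
def NCC : ℕ → ℕ → Finset (List (ℕ × ℕ))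
  | ν, 0 => if ν = 0 then {[]} else ∅
  | ν, m + 1 => (Icc 1 ν).biUnion fun p =>
      (Icc 1 p).biUnion fun c => (NCC (ν - p) m).image (List.cons (p, c))

lemma mem_NCC : ∀ (m ν : ℕ) (l : List (ℕ × ℕ)),
    l ∈ NCC ν m ↔ ((∀ pc ∈ l, 1 ≤ pc.2 ∧ pc.2 ≤ pc.1) ∧ (l.map Prod.fst).sum = ν
      ∧ l.length = m)
  | 0, ν, l => by
    simp only [NCC]
    constructor
    · intro h
      split at h
      · simp_all [Finset.mem_singleton]
      · simp at h
    · rintro ⟨-, hsum, hlen⟩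
      rw [List.length_eq_zero_iff] at hlen
      subst hlen
      simp at hsum
      simp [hsum]
  | m + 1, ν, l => by
    simp only [NCC, Finset.mem_biUnion, Finset.mem_image, Finset.mem_Icc]
    constructor
    · rintro ⟨p, ⟨hp1, hpν⟩, c, ⟨hc1, hcp⟩, t, ht, rfl⟩
      rw [mem_NCC] at ht
      obtain ⟨hcol, hsum, hlen⟩ := ht
      refine ⟨?_, ?_, ?_⟩
      · rintro pc hpc
        rcases List.mem_cons.1 hpc with rfl | h
        · exact ⟨hc1, hcp⟩
        · exact hcol pc h
      · simp only [List.map_cons, List.sum_cons, hsum]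
        omega
      · simp [hlen]
    · rintro ⟨hcol, hsum, hlen⟩
      match l with
      | [] => simp at hlen
      | (p, c) :: t =>
        have hpc := hcol (p, c) (by simp)
        simp only [List.map_cons, List.sum_cons] at hsum
        have hp1 : 1 ≤ p := le_trans hpc.1 hpc.2
        refine ⟨p, ⟨hp1, by omega⟩, c, ⟨hpc.1, hpc.2⟩, t, ?_, rfl⟩
        rw [mem_NCC]
        refine ⟨fun x hx => hcol x (List.mem_cons_of_mem _ hx), by omega, by simpa using hlen⟩

lemma card_NCC_succ (ν m : ℕ) :
    (NCC ν (m + 1)).card = ∑ p ∈ Icc 1 ν, p * (NCC (ν - p) m).card := by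
  rw [NCC, Finset.card_biUnion]
  · refine Finset.sum_congr rfl fun p hp => ?_
    rw [Finset.card_biUnion]
    · rw [Finset.sum_congr rfl fun c _ =>
        Finset.card_image_of_injective _ (fun a b h => by injection h)]
      simp [Nat.card_Icc, mul_comm]
    · intro c₁ h₁ c₂ h₂ hne
      simp only [Finset.disjoint_left, Finset.mem_image]
      rintro l ⟨t, _, rfl⟩ ⟨t', _, h⟩
      injection h with h1 _
      injection h1 with _ h2
      exact hne h2.symm
  · intro p₁ h₁ p₂ h₂ hne
    simp only [Finset.disjoint_left, Finset.mem_biUnion, Finset.mem_image]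
    rintro l ⟨c, _, t, _, rfl⟩ ⟨c', _, t', _, h⟩
    injection h with h1 _
    injection h1 with h2 _
    exact hne h2.symm

/-- Extend the lower end of an `Icc` sum of binomial coefficients by zero terms. -/
lemma sum_Icc_choose_ext (a k N : ℕ) (ha : a ≤ k) :
    ∑ i ∈ Icc a N, Nat.choose i k = (N + 1).choose (k + 1) := by
  rw [← Nat.sum_Icc_choose N k]
  refine (Finset.sum_subset (fun x hx => ?_) (fun x hx hx' => ?_)).symm
  · simp only [Finset.mem_Icc] at hx ⊢
    omega
  · simp only [Finset.mem_Icc] at hx hx'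
    exact Nat.choose_eq_zero_of_lt (by omega)

lemma key_sum (ν m : ℕ) (hm : 1 ≤ m) :
    ∑ p ∈ Icc 1 ν, p * Nat.choose (ν - p + m - 1) (2 * m - 1)
      = Nat.choose (ν + m) (2 * m + 1) := by
  have step1 : ∑ p ∈ Icc 1 ν, p * Nat.choose (ν - p + m - 1) (2 * m - 1)
      = ∑ p ∈ Icc 1 ν, ∑ _c ∈ Icc 1 p, Nat.choose (ν - p + m - 1) (2 * m - 1) := by
    refine Finset.sum_congr rfl fun p _ => ?_
    rw [Finset.sum_const, Nat.card_Icc, smul_eq_mul, Nat.add_sub_cancel]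
  rw [step1]
  rw [Finset.sum_comm' (t' := Icc 1 ν) (s' := fun c => Icc c ν)
    (by intro p c; simp only [Finset.mem_Icc]; omega)]
  have inner : ∀ c ∈ Icc 1 ν,
      ∑ p ∈ Icc c ν, Nat.choose (ν - p + m - 1) (2 * m - 1)
        = Nat.choose (ν - c + m) (2 * m) := by
    intro c hc
    simp only [Finset.mem_Icc] at hc
    have : ∑ p ∈ Icc c ν, Nat.choose (ν - p + m - 1) (2 * m - 1)
        = ∑ k ∈ Icc (m - 1) (ν - c + m - 1), Nat.choose k (2 * m - 1) := by
      refine Finset.sum_nbij' (fun p => ν - p + m - 1) (fun k => ν - (k - (m - 1))) ?_ ?_ ?_ ?_ ?_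
      · intro p hp; simp only [Finset.mem_Icc] at hp ⊢; omega
      · intro k hk; simp only [Finset.mem_Icc] at hk ⊢; omega
      · intro p hp; simp only [Finset.mem_Icc] at hp; omega
      · intro k hk; simp only [Finset.mem_Icc] at hk; omega
      · intro p hp; rfl
    rw [this, sum_Icc_choose_ext (m - 1) (2 * m - 1) (ν - c + m - 1) (by omega)]
    congr 1 <;> omega
  rw [Finset.sum_congr rfl inner]
  have outer : ∑ c ∈ Icc 1 ν, Nat.choose (ν - c + m) (2 * m)
      = ∑ j ∈ Icc m (ν + m - 1), Nat.choose j (2 * m) := by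
    refine Finset.sum_nbij' (fun c => ν - c + m) (fun j => ν - (j - m)) ?_ ?_ ?_ ?_ ?_
    · intro c hc; simp only [Finset.mem_Icc] at hc ⊢; omega
    · intro j hj; simp only [Finset.mem_Icc] at hj ⊢; omega
    · intro c hc; simp only [Finset.mem_Icc] at hc; omega
    · intro j hj; simp only [Finset.mem_Icc] at hj; omega
    · intro c hc; rfl
  rw [outer, sum_Icc_choose_ext m (2 * m) (ν + m - 1) (by omega)]
  congr 1
  omega

lemma card_NCC : ∀ (m : ℕ), 1 ≤ m → ∀ (ν : ℕ),
    (NCC ν m).card = Nat.choose (ν + m - 1) (2 * m - 1)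
  | 1, _, ν => by
    rw [card_NCC_succ]
    have : ∀ p ∈ Icc 1 ν, p * (NCC (ν - p) 0).card = if p = ν then ν else 0 := by
      intro p hp
      simp only [Finset.mem_Icc] at hp
      simp only [NCC]
      by_cases h : p = ν
      · subst h
        simp [Nat.sub_self]
      · have h0 : ¬ (ν - p = 0) := by omega
        simp [h0, h]
    rw [Finset.sum_congr rfl this, Finset.sum_ite_eq' (Icc 1 ν) ν (fun _ => ν)]
    have hν : (ν : ℕ) ∈ Icc 1 ν ∨ ν = 0 := by
      rcases Nat.eq_zero_or_pos ν with h | h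
      · right; exact h
      · left; simp [Finset.mem_Icc]; omega
    rcases hν with h | h
    · rw [if_pos h]
      simp [Nat.choose_one_right]
    · subst h; simp
  | m + 2, _, ν => by
    rw [card_NCC_succ]
    have ih : ∀ p ∈ Icc 1 ν, p * (NCC (ν - p) (m + 1)).card
        = p * Nat.choose (ν - p + (m + 1) - 1) (2 * (m + 1) - 1) := by
      intro p _
      rw [card_NCC (m + 1) (by omega) (ν - p)]
    rw [Finset.sum_congr rfl ih]
    have := key_sum ν (m + 1) (by omega)
    have e1 : ∀ p, ν - p + (m + 1) - 1 = ν - p + (m + 1) - 1 := fun _ => rfl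
    calc ∑ p ∈ Icc 1 ν, p * Nat.choose (ν - p + (m + 1) - 1) (2 * (m + 1) - 1)
        = Nat.choose (ν + (m + 1)) (2 * (m + 1) + 1) := this
      _ = Nat.choose (ν + (m + 2) - 1) (2 * (m + 2) - 1) := by congr 1 <;> omega

/-- The palindrome self-inverse compositions of `2ν` with `2m` parts biject with
n-colour compositions of `ν` with `m` parts, via taking the first half. -/
def selfInverseEquiv (ν m : ℕ) :
    {l : List (ℕ × ℕ) //
        IsNColourComposition (2 * ν) l ∧ l.reverse = l ∧ l.length = 2 * m} ≃
      {l : List (ℕ × ℕ) // l ∈ NCC ν m} where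
  toFun := fun l => ⟨l.1.take m, by
    obtain ⟨⟨hcol, hsum⟩, hrev, hlen⟩ := l.2
    rw [mem_NCC]
    have hdrop : l.1.drop m = (l.1.take m).reverse := by
      rw [List.reverse_take, hrev, hlen]
      congr 1
      omega
    refine ⟨fun pc hpc => hcol pc (List.take_subset m l.1 hpc), ?_, ?_⟩
    · have := List.take_append_drop m l.1
      have hs : ((l.1.take m).map Prod.fst).sum + ((l.1.drop m).map Prod.fst).sum = 2 * ν := by
        rw [← List.sum_append, ← List.map_append, this, hsum]
      rw [hdrop] at hs
      simp only [List.map_reverse, List.sum_reverse] at hs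
      omega
    · rw [List.length_take, hlen]
      omega⟩
  invFun := fun h => ⟨h.1 ++ h.1.reverse, by
    have hmem := h.2
    rw [mem_NCC] at hmem
    obtain ⟨hcol, hsum, hlen⟩ := hmem
    refine ⟨⟨?_, ?_⟩, ?_, ?_⟩
    · intro pc hpc
      rcases List.mem_append.1 hpc with h' | h'
      · exact hcol pc h'
      · exact hcol pc (List.mem_reverse.1 h')
    · simp only [List.map_append, List.sum_append, List.map_reverse, List.sum_reverse, hsum]
      omega
    · simp
    · simp only [List.length_append, List.length_reverse, hlen]; omega⟩
  left_inv := by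
    rintro ⟨l, ⟨hcol, hsum⟩, hrev, hlen⟩
    ext1
    show l.take m ++ (l.take m).reverse = l
    have hdrop : l.drop m = (l.take m).reverse := by
      rw [List.reverse_take, hrev, hlen]
      congr 1
      omega
    rw [← hdrop, List.take_append_drop]
  right_inv := by
    rintro ⟨h, hmem⟩
    rw [mem_NCC] at hmem
    ext1
    show List.take m (h ++ h.reverse) = h
    exact List.take_left' hmem.2.2

theorem selfinverse_even_number_even_parts (m ν : ℕ) (hm : 1 ≤ m) (hν : 1 ≤ ν) :
    Nat.card {l : List (ℕ × ℕ) //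
        IsNColourComposition (2 * ν) l ∧ l.reverse = l ∧ l.length = 2 * m} =
      Nat.choose (ν + m - 1) (2 * m - 1) := by
  rw [Nat.card_congr (selfInverseEquiv ν m), Nat.card_eq_finsetCard, card_NCC m hm ν]
end

section
/- For every integer ν ≥ 1, the number of n-colour self-inverse compositions of 2ν into an odd number of parts equals 2ν + Σ_{m=2}^{ν} Σ_{l=1}^{ν−1} 2l·C(ν+m−l−2, 2m−3). -/
def compFinset : ℕ → Finset (List (ℕ × ℕ))
  | 0 => {[]}
  | (n+1) => (Finset.Icc 1 (n+1)).attach.biUnion fun p =>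
      (Finset.Icc 1 p.1).biUnion fun c =>
        (compFinset (n+1-p.1)).image (List.cons (p.1, c))
  decreasing_by
    have := Finset.mem_Icc.mp p.2; omega

lemma mem_compFinset : ∀ (n : ℕ) (l : List (ℕ × ℕ)),
    l ∈ compFinset n ↔ IsNColourComposition n l := by
  intro n
  induction n using Nat.strong_induction_on with
  | _ n ih =>
    intro l
    match n, l with
    | 0, [] =>
      simp [compFinset, IsNColourComposition]
    | 0, (p, c) :: t =>
      simp only [compFinset, Finset.mem_singleton, IsNColourComposition]
      constructor
      · intro h; exact absurd h (by simp)
      · rintro ⟨h1, h2⟩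
        have := h1 (p, c) (by simp)
        simp at h2; omega
    | (n+1), [] =>
      simp only [compFinset, Finset.mem_biUnion, IsNColourComposition]
      constructor
      · rintro ⟨p, _, c, _, h⟩
        simp at h
      · rintro ⟨-, h2⟩; simp at h2
    | (n+1), (p, c) :: t =>
      simp only [compFinset, Finset.mem_biUnion, Finset.mem_attach, true_and,
        Finset.mem_image, Subtype.exists]
      constructor
      · rintro ⟨p', hp', c', hc', t', ht', heq⟩
        obtain ⟨⟨rfl, rfl⟩, rfl⟩ : (p' = p ∧ c' = c) ∧ t' = t := by
          simpa using heq
        have hp'' := Finset.mem_Icc.mp hp'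
        have hc'' := Finset.mem_Icc.mp hc'
        have ht := (ih (n+1-p') (by omega) t').mp ht'
        obtain ⟨h1, h2⟩ := ht
        refine ⟨?_, ?_⟩
        · rintro pc hpc
          rcases List.mem_cons.mp hpc with h | h
          · subst h; exact ⟨hc''.1, hc''.2⟩
          · exact h1 pc h
        · simp only [List.map_cons, List.sum_cons]
          omega
      · rintro ⟨h1, h2⟩
        have hpc := h1 (p, c) (by simp)
        simp only [List.map_cons, List.sum_cons] at h2
        have hp : 1 ≤ p ∧ p ≤ n + 1 := by
          constructor
          · omega
          · omega
        refine ⟨p, Finset.mem_Icc.mpr hp, c, Finset.mem_Icc.mpr ⟨hpc.1, hpc.2⟩, t, ?_, rfl⟩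
        refine (ih (n+1-p) (by omega) t).mpr ⟨fun pc h => h1 pc (List.mem_cons_of_mem _ h), ?_⟩
        omega

lemma selfinv_structure {α : Type*} (l : List α) (k : ℕ) (hrev : l.reverse = l)
    (hlen : l.length = 2 * k + 1) :
    l = l.take k ++ l.get ⟨k, by omega⟩ :: (l.take k).reverse := by
  have hk : k < l.length := by omega
  have h1 : (l.take k).reverse = l.drop (k + 1) := by
    rw [List.reverse_take, hrev]
    congr 1
    omega
  rw [h1, List.get_eq_getElem, ← List.drop_eq_getElem_cons hk]
  exact (List.take_append_drop k l).symm

def selfInvFinset (ν : ℕ) : Finset (List (ℕ × ℕ)) :=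
  (Finset.Icc 1 ν).biUnion fun q =>
    (Finset.Icc 1 (2 * q)).biUnion fun c =>
      (compFinset (ν - q)).image fun a => a ++ (2 * q, c) :: a.reverse

lemma mem_selfInvFinset (ν : ℕ) (l : List (ℕ × ℕ)) :
    l ∈ selfInvFinset ν ↔
      IsNColourComposition (2 * ν) l ∧ l.reverse = l ∧ Odd l.length := by
  unfold selfInvFinset
  simp only [Finset.mem_biUnion, Finset.mem_image, Finset.mem_Icc]
  constructor
  · rintro ⟨q, hq, c, hc, a, ha, rfl⟩
    obtain ⟨h1, h2⟩ := (mem_compFinset _ _).mp ha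
    refine ⟨⟨?_, ?_⟩, ?_, ?_⟩
    · intro pc hpc
      simp only [List.mem_append, List.mem_cons, List.mem_reverse] at hpc
      rcases hpc with h | h | h
      · exact h1 pc h
      · subst h; exact ⟨hc.1, hc.2⟩
      · exact h1 pc h
    · simp only [List.map_append, List.map_cons, List.sum_append, List.sum_cons,
        List.map_reverse, List.sum_reverse, h2]
      omega
    · simp
    · simp [Nat.odd_iff, Nat.add_mod, Nat.mul_mod]
  · rintro ⟨⟨h1, h2⟩, hrev, hodd⟩
    obtain ⟨k, hk⟩ := hodd
    have hlen : l.length = 2 * k + 1 := by omega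
    have hstruct := selfinv_structure l k hrev hlen
    set a := l.take k with ha
    set x := l.get ⟨k, by omega⟩ with hx
    have hxmem : x ∈ l := by rw [hx]; exact l.get_mem _
    have hxc := h1 x hxmem
    have hamem : ∀ pc ∈ a, 1 ≤ pc.2 ∧ pc.2 ≤ pc.1 := fun pc h =>
      h1 pc (List.mem_of_mem_take h)
    have hsum : 2 * (a.map Prod.fst).sum + x.1 = 2 * ν := by
      have := congrArg (fun t => (List.map Prod.fst t).sum) hstruct
      simp only [List.map_append, List.map_cons, List.sum_append, List.sum_cons,
        List.map_reverse, List.sum_reverse] at this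
      omega
    set s := (a.map Prod.fst).sum with hs
    have hsle : s < ν := by omega
    refine ⟨ν - s, ⟨by omega, by omega⟩, x.2, ⟨hxc.1, ?_⟩, a, ?_, ?_⟩
    · have : x.1 = 2 * (ν - s) := by omega
      omega
    · exact (mem_compFinset _ _).mpr ⟨hamem, by omega⟩
    · have hx1 : x.1 = 2 * (ν - s) := by omega
      have hxeq : ((2 * (ν - s), x.2) : ℕ × ℕ) = x := by rw [← hx1]
      rw [hxeq]
      exact hstruct.symm

lemma enc_inj {α : Type*} {a b : List α} {x y : α}
    (h : a ++ x :: a.reverse = b ++ y :: b.reverse) : a = b ∧ x = y := by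
  have hlen : a.length = b.length := by
    have := congrArg List.length h
    simp at this
    omega
  obtain ⟨h1, h2⟩ := List.append_inj h hlen
  exact ⟨h1, ((by simpa using h2 : x = y ∧ a = b)).1⟩

lemma selfInvFinset_card (ν : ℕ) :
    (selfInvFinset ν).card = ∑ q ∈ Finset.Icc 1 ν, 2 * q * (compFinset (ν - q)).card := by
  unfold selfInvFinset
  rw [Finset.card_biUnion]
  · refine Finset.sum_congr rfl fun q _ => ?_
    rw [Finset.card_biUnion]
    · have : ∀ c ∈ Finset.Icc 1 (2 * q),
          ((compFinset (ν - q)).image fun a => a ++ (2 * q, c) :: a.reverse).card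
            = (compFinset (ν - q)).card := by
        intro c _
        exact Finset.card_image_of_injective _ (fun a b h => (enc_inj h).1)
      rw [Finset.sum_congr rfl this, Finset.sum_const, Nat.card_Icc]
      simp [mul_comm]
    · intro c _ c' _ hne
      simp only [Finset.disjoint_left, Finset.mem_image]
      rintro l ⟨a, _, rfl⟩ ⟨b, _, heq⟩
      obtain ⟨-, hx⟩ := enc_inj heq
      have : c' = c := congrArg Prod.snd hx
      exact hne this.symm
  · intro q _ q' _ hne
    simp only [Finset.disjoint_left, Finset.mem_biUnion, Finset.mem_image]
    rintro l ⟨c, _, a, _, rfl⟩ ⟨c', _, b, _, heq⟩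
    obtain ⟨-, hx⟩ := enc_inj heq
    have := congrArg Prod.fst hx
    simp only at this
    exact hne (by omega)

def gfun (n : ℕ) : ℕ := ∑ m ∈ Finset.range n, Nat.choose (n + m) (2 * m + 1)

lemma L1' (N m k : ℕ) (h : m ≤ k) :
    ∑ i ∈ Finset.range N, Nat.choose (i + m) k = Nat.choose (N + m) (k + 1) := by
  induction N with
  | zero => rw [Nat.choose_eq_zero_of_lt (by omega : 0 + m < k + 1)]; simp
  | succ N ih =>
    rw [Finset.sum_range_succ, ih, show N + 1 + m = (N + m) + 1 by ring,
      Nat.choose_succ_succ' (N + m) k]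
    omega

lemma L2' (n m k : ℕ) (h : m ≤ k) :
    ∑ i ∈ Finset.range n, (n - i) * Nat.choose (i + m) k = Nat.choose (n + m + 1) (k + 2) := by
  induction n with
  | zero => rw [Nat.choose_eq_zero_of_lt (by omega : 0 + m + 1 < k + 2)]; simp
  | succ n ih =>
    have step : ∀ i ∈ Finset.range (n+1),
        (n + 1 - i) * Nat.choose (i + m) k
          = (n - i) * Nat.choose (i + m) k + Nat.choose (i + m) k := by
      intro i hi
      have h1 : i ≤ n := by simpa [Nat.lt_succ_iff] using hi
      have h2 : n + 1 - i = (n - i) + 1 := by omega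
      rw [h2]; ring
    rw [Finset.sum_congr rfl step, Finset.sum_add_distrib, Finset.sum_range_succ,
      Nat.sub_self, zero_mul, add_zero, ih, L1' (n+1) m k h,
      show n + 1 + m = (n + m + 1) by ring,
      Nat.choose_succ_succ' (n + m + 1) (k+1)]
    simp only [show k + 1 + 1 = k + 2 from rfl]
    omega

lemma L3 (n m : ℕ) :
    ∑ p ∈ Finset.Icc 1 n, p * Nat.choose (n - p + m) (2 * m + 1)
      = Nat.choose (n + m + 1) (2 * m + 3) := by
  have h0 : Finset.Icc 1 n = Finset.Ico 1 (n + 1) := by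
    rw [Finset.Ico_add_one_right_eq_Icc]
  rw [h0, Finset.sum_Ico_eq_sum_range]
  simp only [Nat.add_sub_cancel]
  rw [← Finset.sum_range_reflect (fun i => (1 + i) * Nat.choose (n - (1 + i) + m) (2 * m + 1)) n]
  have step : ∀ j ∈ Finset.range n,
      (1 + (n - 1 - j)) * Nat.choose (n - (1 + (n - 1 - j)) + m) (2 * m + 1)
        = (n - j) * Nat.choose (j + m) (2 * m + 1) := by
    intro j hj
    have hj' : j < n := Finset.mem_range.mp hj
    have e1 : 1 + (n - 1 - j) = n - j := by omega
    have e2 : n - (n - j) = j := by omega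
    rw [e1, e2]
  rw [Finset.sum_congr rfl step, L2' n m (2 * m + 1) (by omega)]

lemma gfun_rec (n : ℕ) :
    gfun n = n + ∑ p ∈ Finset.Icc 1 n, p * gfun (n - p) := by
  have ext1 : ∀ p ∈ Finset.Icc 1 n, p * gfun (n - p)
      = ∑ m ∈ Finset.range n, p * Nat.choose (n - p + m) (2 * m + 1) := by
    intro p hp
    have hp' := Finset.mem_Icc.mp hp
    unfold gfun
    rw [Finset.mul_sum]
    rw [← Finset.sum_range_add_sum_Ico (fun m => p * Nat.choose (n - p + m) (2 * m + 1))
        (show n - p ≤ n by omega)]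
    have hz : ∑ m ∈ Finset.Ico (n - p) n, p * Nat.choose (n - p + m) (2 * m + 1) = 0 := by
      refine Finset.sum_eq_zero fun m hm => ?_
      have := Finset.mem_Ico.mp hm
      rw [Nat.choose_eq_zero_of_lt (by omega)]; ring
    omega
  rw [Finset.sum_congr rfl ext1, Finset.sum_comm]
  have inner : ∀ m ∈ Finset.range n,
      ∑ p ∈ Finset.Icc 1 n, p * Nat.choose (n - p + m) (2 * m + 1)
        = Nat.choose (n + m + 1) (2 * m + 3) := fun m _ => L3 n m
  rw [Finset.sum_congr rfl inner]
  cases n with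
  | zero => simp [gfun]
  | succ N =>
    unfold gfun
    rw [Finset.sum_range_succ' (fun m => Nat.choose (N + 1 + m) (2 * m + 1)) N,
      Finset.sum_range_succ (fun m => Nat.choose (N + 1 + m + 1) (2 * m + 3)) N,
      Nat.choose_eq_zero_of_lt (show N + 1 + N + 1 < 2 * N + 3 by omega)]
    have : ∀ m ∈ Finset.range N,
        Nat.choose (N + 1 + (m + 1)) (2 * (m + 1) + 1) = Nat.choose (N + 1 + m + 1) (2 * m + 3) := by
      intro m _
      congr 1
    rw [Finset.sum_congr rfl this]
    simp [Nat.choose_one_right]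
    omega

lemma compFinset_zero_card : (compFinset 0).card = 1 := by
  simp [compFinset]

lemma compFinset_card_succ (n : ℕ) :
    (compFinset (n+1)).card = ∑ p ∈ Finset.Icc 1 (n+1), p * (compFinset (n+1-p)).card := by
  conv_lhs => rw [compFinset]
  rw [Finset.card_biUnion]
  · rw [← Finset.sum_attach (Finset.Icc 1 (n+1)) (fun p => p * (compFinset (n+1-p)).card)]
    refine Finset.sum_congr rfl fun p _ => ?_
    rw [Finset.card_biUnion]
    · have : ∀ c ∈ Finset.Icc 1 p.1,
          ((compFinset (n+1-p.1)).image (List.cons (p.1, c))).card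
            = (compFinset (n+1-p.1)).card := by
        intro c _
        exact Finset.card_image_of_injective _ (fun a b h => by simpa using h)
      rw [Finset.sum_congr rfl this, Finset.sum_const, Nat.card_Icc]
      simp [Nat.smul_one_eq_cast]
    · intro c _ c' _ hne
      simp only [Finset.disjoint_left, Finset.mem_image]
      rintro l ⟨a, _, rfl⟩ ⟨b, _, heq⟩
      have : c' = c := by
        have := congrArg (fun l => (l.headI).2) heq
        simpa using this
      exact hne this.symm
  · intro p _ q _ hne
    simp only [Finset.disjoint_left, Finset.mem_biUnion, Finset.mem_image]
    rintro l ⟨c, _, a, _, rfl⟩ ⟨c', _, b, _, heq⟩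
    have : (q : ℕ) = p := by
      have := congrArg (fun l => (l.headI).1) heq
      simpa using this
    exact hne (Subtype.ext this.symm)

lemma compFinset_card_eq_gfun : ∀ n : ℕ, 1 ≤ n → (compFinset n).card = gfun n := by
  intro n
  induction n using Nat.strong_induction_on with
  | _ n ih =>
    intro hn
    obtain ⟨N, rfl⟩ : ∃ N, n = N + 1 := ⟨n - 1, by omega⟩
    rw [compFinset_card_succ, gfun_rec]
    rw [Finset.sum_Icc_succ_top (by omega : 1 ≤ N + 1),
      Finset.sum_Icc_succ_top (by omega : 1 ≤ N + 1)]
    have h1 : ∀ p ∈ Finset.Icc 1 N,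
        p * (compFinset (N + 1 - p)).card = p * gfun (N + 1 - p) := by
      intro p hp
      have hp' := Finset.mem_Icc.mp hp
      rw [ih (N + 1 - p) (by omega) (by omega)]
    rw [Finset.sum_congr rfl h1]
    have h2 : gfun 0 = 0 := by simp [gfun]
    rw [Nat.sub_self, compFinset_zero_card, h2]
    ring

theorem selfinverse_even_oddparts_formula (ν : ℕ) (hν : 1 ≤ ν) :
    Nat.card {l : List (ℕ × ℕ) //
        IsNColourComposition (2 * ν) l ∧ l.reverse = l ∧ Odd l.length} =
      2 * ν + ∑ m ∈ Finset.Icc 2 ν, ∑ l ∈ Finset.Icc 1 (ν - 1),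
        2 * l * Nat.choose (ν + m - l - 2) (2 * m - 3) := by
  have hset : ∀ l : List (ℕ × ℕ),
      (IsNColourComposition (2 * ν) l ∧ l.reverse = l ∧ Odd l.length)
        ↔ l ∈ selfInvFinset ν := fun l => (mem_selfInvFinset ν l).symm
  rw [Nat.card_congr (Equiv.subtypeEquivRight hset), Nat.card_eq_fintype_card,
    Fintype.card_coe, selfInvFinset_card]
  -- LHS : ∑ q ∈ Icc 1 ν, 2*q * (compFinset (ν - q)).card
  obtain ⟨V, rfl⟩ : ∃ V, ν = V + 1 := ⟨ν - 1, by omega⟩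
  rw [Finset.sum_Icc_succ_top (by omega : 1 ≤ V + 1)]
  have hL : ∀ q ∈ Finset.Icc 1 V,
      2 * q * (compFinset (V + 1 - q)).card = 2 * q * gfun (V + 1 - q) := by
    intro q hq
    have hq' := Finset.mem_Icc.mp hq
    rw [compFinset_card_eq_gfun (V + 1 - q) (by omega)]
  rw [Finset.sum_congr rfl hL, Nat.sub_self, compFinset_zero_card]
  -- RHS
  rw [Finset.sum_comm]
  have hR : ∀ l ∈ Finset.Icc 1 (V + 1 - 1),
      ∑ m ∈ Finset.Icc 2 (V + 1), 2 * l * Nat.choose (V + 1 + m - l - 2) (2 * m - 3)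
        = 2 * l * gfun (V + 1 - l) := by
    intro l hl
    have hl' := Finset.mem_Icc.mp hl
    rw [← Finset.mul_sum]
    congr 1
    rw [show Finset.Icc 2 (V + 1) = Finset.Ico 2 (V + 2) from (Finset.Ico_add_one_right_eq_Icc 2 (V+1)).symm,
      Finset.sum_Ico_eq_sum_range]
    have e1 : V + 2 - 2 = V := by omega
    rw [e1]
    have e2 : ∀ i ∈ Finset.range V,
        Nat.choose (V + 1 + (2 + i) - l - 2) (2 * (2 + i) - 3)
          = Nat.choose (V + 1 - l + i) (2 * i + 1) := by
      intro i _
      congr 1 <;> omega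
    rw [Finset.sum_congr rfl e2]
    unfold gfun
    rw [← Finset.sum_range_add_sum_Ico (fun i => Nat.choose (V + 1 - l + i) (2 * i + 1))
        (show V + 1 - l ≤ V by omega)]
    have hz : ∑ i ∈ Finset.Ico (V + 1 - l) V,
        Nat.choose (V + 1 - l + i) (2 * i + 1) = 0 := by
      refine Finset.sum_eq_zero fun i hi => ?_
      have := Finset.mem_Ico.mp hi
      exact Nat.choose_eq_zero_of_lt (by omega)
    omega
  rw [Finset.sum_congr rfl hR]
  have e3 : V + 1 - 1 = V := by omega
  rw [e3]
  ring
end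

section
/- Let a_n denote the number of n-colour self-inverse compositions of 2n+1. Then, as formal power series over ℤ, (1 − 3X + X²) · Σ_{n≥0} a_n Xⁿ = 1 + X. -/
/-- The number of n-colour compositions of `ν`, defined by the first-part recursion. -/
def fc : ℕ → ℕ
  | 0 => 1
  | n + 1 => ∑ i ∈ (Finset.range (n+1)).attach, (n + 1 - i.1) * fc i.1
  decreasing_by exact Finset.mem_range.mp i.2

lemma fc_succ (n : ℕ) : fc (n+1) = ∑ i ∈ Finset.range (n+1), (n + 1 - i) * fc i := by
  rw [fc, ← Finset.sum_attach (Finset.range (n+1)) (fun i => (n + 1 - i) * fc i)]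

lemma fc_zero : fc 0 = 1 := by rw [fc]

/-- The number of n-colour self-inverse compositions of `2n+1`. -/
def gq (n : ℕ) : ℕ := ∑ i ∈ Finset.range (n+1), (2*(n-i)+1) * fc i

lemma fc_succ2 (n : ℕ) : fc (n+2) = ∑ i ∈ Finset.range (n+1), (2*(n-i)+3) * fc i := by
  rw [fc_succ (n+1), Finset.sum_range_succ]
  have e1 : n + 1 + 1 - (n+1) = 1 := by omega
  rw [e1, one_mul, fc_succ n, ← Finset.sum_add_distrib]
  refine Finset.sum_congr rfl fun i hi => ?_
  have hi' := Finset.mem_range.mp hi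
  rw [← Nat.add_mul]
  congr 1
  omega

lemma gq_zero : gq 0 = 1 := by simp [gq, fc_zero]

lemma gq_one : gq 1 = 4 := by
  rw [gq]
  rw [Finset.sum_range_succ, Finset.sum_range_one]
  rw [fc_zero, fc_succ, Finset.sum_range_one, fc_zero]

lemma gq_rec (n : ℕ) : gq (n+2) + gq n = 3 * gq (n+1) := by
  unfold gq
  rw [Finset.sum_range_succ _ (n+2), Finset.sum_range_succ _ (n+1),
    Finset.sum_range_succ _ (n+1), fc_succ2]
  have e1 : 2*(n+2-(n+1))+1 = 3 := by omega
  have e2 : 2*(n+2-(n+2))+1 = 1 := by omega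
  have e3 : 2*(n+1-(n+1))+1 = 1 := by omega
  rw [e1, e2, e3, one_mul, one_mul, Nat.mul_add, Finset.mul_sum]
  have key : ∀ i ∈ Finset.range (n+1),
      (2*(n+2-i)+1) * fc i + ((2*(n-i)+3) * fc i + (2*(n-i)+1) * fc i)
      = 3*((2*(n+1-i)+1) * fc i) := by
    intro i hi
    have hi' := Finset.mem_range.mp hi
    rw [← Nat.add_mul, ← Nat.add_mul, ← Nat.mul_assoc]
    congr 1
    omega
  have merged : ∑ i ∈ Finset.range (n+1), (2*(n+2-i)+1) * fc i
      + (∑ i ∈ Finset.range (n+1), (2*(n-i)+3) * fc i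
        + ∑ i ∈ Finset.range (n+1), (2*(n-i)+1) * fc i)
      = ∑ i ∈ Finset.range (n+1), 3*((2*(n+1-i)+1) * fc i) := by
    rw [← Finset.sum_add_distrib, ← Finset.sum_add_distrib]
    exact Finset.sum_congr rfl key
  omega

lemma Nat.card_sigma' {ι : Type*} [Fintype ι] (β : ι → Type*) [∀ i, Finite (β i)] :
    Nat.card (Σ i, β i) = ∑ i, Nat.card (β i) := by
  classical
  haveI h : ∀ i, Fintype (β i) := fun i => Fintype.ofFinite _
  simp [Nat.card_eq_fintype_card, Fintype.card_sigma]

lemma comp_zero_unique : ∀ l, IsNColourComposition 0 l → l = [] := by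
  rintro (_ | ⟨pc, t⟩) h
  · rfl
  · exfalso
    have h1 := h.1 pc (List.mem_cons_self)
    have h2 := h.2
    simp only [List.map_cons, List.sum_cons] at h2
    omega

noncomputable instance compZeroUnique : Unique {l : List (ℕ × ℕ) // IsNColourComposition 0 l} where
  default := ⟨[], by constructor <;> simp⟩
  uniq := fun l => Subtype.ext (comp_zero_unique l.1 l.2)

/-- Splitting off the first part of a composition of `ν + 1`. -/
def compCons (ν : ℕ) :
    (Σ p : Fin (ν+1), Fin (p.1+1) × {l : List (ℕ × ℕ) // IsNColourComposition (ν - p.1) l}) →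
    {l : List (ℕ × ℕ) // IsNColourComposition (ν+1) l} := fun ⟨p, c, t⟩ =>
  ⟨(p.1 + 1, c.1 + 1) :: t.1, by
    constructor
    · rintro pc hpc
      rcases List.mem_cons.mp hpc with h | h
      · subst h; exact ⟨Nat.le_add_left 1 _, by have := c.2; omega⟩
      · exact t.2.1 pc h
    · simp only [List.map_cons, List.sum_cons, t.2.2]
      have := p.2; omega⟩

lemma compCons_bij (ν : ℕ) : Function.Bijective (compCons ν) := by
  constructor
  · rintro ⟨p₁, c₁, t₁⟩ ⟨p₂, c₂, t₂⟩ h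
    simp only [compCons] at h
    replace h := congrArg Subtype.val h
    simp only [List.cons.injEq, Prod.mk.injEq] at h
    obtain ⟨⟨hp, hc⟩, ht⟩ := h
    have hp' : p₁ = p₂ := Fin.ext (by omega)
    subst hp'
    have hc' : c₁ = c₂ := Fin.ext (by omega)
    subst hc'
    simp [Subtype.ext ht]
  · rintro ⟨l, hl⟩
    rcases l with _ | ⟨⟨P, C⟩, t⟩
    · exfalso; have := hl.2; simp at this
    · have hhead := hl.1 (P, C) (List.mem_cons_self)
      have hsum := hl.2
      simp only [List.map_cons, List.sum_cons] at hsum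
      have hP1 : 1 ≤ P := le_trans hhead.1 hhead.2
      have hPν : P - 1 < ν + 1 := by omega
      have hCP : C - 1 < (P - 1) + 1 := by omega
      refine ⟨⟨⟨P - 1, hPν⟩, ⟨C - 1, hCP⟩, ⟨t, ?_, ?_⟩⟩, ?_⟩
      · exact fun pc hpc => hl.1 pc (List.mem_cons_of_mem _ hpc)
      · show (t.map Prod.fst).sum = ν - (P - 1); omega
      · apply Subtype.ext
        show (P - 1 + 1, C - 1 + 1) :: t = (P, C) :: t
        rw [show P - 1 + 1 = P by omega, show C - 1 + 1 = C by omega]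

lemma comp_finite_card (ν : ℕ) :
    Finite {l : List (ℕ × ℕ) // IsNColourComposition ν l} ∧
    Nat.card {l : List (ℕ × ℕ) // IsNColourComposition ν l} = fc ν := by
  induction ν using Nat.strong_induction_on with
  | _ ν IH =>
    match ν with
    | 0 => exact ⟨inferInstance, by simp [Nat.card_unique, fc_zero]⟩
    | ν + 1 =>
      haveI hfin : ∀ p : Fin (ν+1), Finite {l : List (ℕ × ℕ) // IsNColourComposition (ν - p.1) l} :=
        fun p => (IH (ν - p.1) (by omega)).1
      have hbij := compCons_bij ν
      have hfin2 : Finite {l : List (ℕ × ℕ) // IsNColourComposition (ν+1) l} :=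
        Finite.of_surjective _ hbij.2
      refine ⟨hfin2, ?_⟩
      rw [← Nat.card_eq_of_bijective _ hbij, Nat.card_sigma']
      have : ∀ p : Fin (ν+1),
          Nat.card (Fin (p.1+1) × {l : List (ℕ × ℕ) // IsNColourComposition (ν - p.1) l})
          = (p.1 + 1) * fc (ν - p.1) := by
        intro p
        rw [Nat.card_prod, Nat.card_eq_fintype_card, Fintype.card_fin, (IH (ν - p.1) (by omega)).2]
      rw [Finset.sum_congr rfl (fun p _ => this p)]
      rw [Fin.sum_univ_eq_sum_range (fun p => (p + 1) * fc (ν - p)), fc_succ]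
      rw [← Finset.sum_range_reflect (fun i => (ν + 1 - i) * fc i) (ν+1)]
      refine Finset.sum_congr rfl fun i hi => ?_
      have hi' := Finset.mem_range.mp hi
      congr 1 <;> omega

/-- Splitting a self-inverse composition of `2n+1` into its first half and middle part. -/
def siCons (n : ℕ) :
    (Σ j : Fin (n+1), Fin (2*j.1+1) × {l : List (ℕ × ℕ) // IsNColourComposition (n - j.1) l}) →
    {l : List (ℕ × ℕ) // IsNColourComposition (2*n+1) l ∧ l.reverse = l} := fun ⟨j, c, h⟩ =>
  ⟨h.1 ++ (2*j.1+1, c.1+1) :: h.1.reverse, by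
    refine ⟨⟨?_, ?_⟩, ?_⟩
    · rintro pc hpc
      rcases List.mem_append.mp hpc with hm | hm
      · exact h.2.1 pc hm
      · rcases List.mem_cons.mp hm with hm | hm
        · subst hm; exact ⟨Nat.le_add_left 1 _, by have := c.2; omega⟩
        · exact h.2.1 pc (List.mem_reverse.mp hm)
    · have hs := h.2.2
      have hj := j.2
      simp only [List.map_append, List.sum_append, List.map_cons, List.sum_cons,
        List.map_reverse, List.sum_reverse, hs]
      omega
    · simp [List.reverse_append]⟩

lemma siCons_bij (n : ℕ) : Function.Bijective (siCons n) := by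
  constructor
  · rintro ⟨j₁, c₁, h₁⟩ ⟨j₂, c₂, h₂⟩ heq
    simp only [siCons, Subtype.mk.injEq] at heq
    have hlen : h₁.1.length = h₂.1.length := by
      have := congrArg List.length heq
      simp only [List.length_append, List.length_cons, List.length_reverse] at this
      omega
    obtain ⟨hh, htail⟩ := List.append_inj heq hlen
    rw [List.cons.injEq, Prod.mk.injEq] at htail
    obtain ⟨⟨hj, hc⟩, -⟩ := htail
    have hj' : j₁ = j₂ := Fin.ext (by omega)
    subst hj'
    have hc' : c₁ = c₂ := Fin.ext (by omega)
    subst hc'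
    simp [Subtype.ext hh]
  · rintro ⟨l, hl, hrev⟩
    rcases Nat.even_or_odd l.length with ⟨k, hk⟩ | ⟨k, hk⟩
    · -- even length: impossible since the sum of parts is odd
      exfalso
      set h := l.take k with hhdef
      set t := l.drop k with htdef
      have hht : l = h ++ t := (List.take_append_drop k l).symm
      have hhl : h.length = k := by rw [hhdef, List.length_take]; omega
      have htl : t.length = k := by rw [htdef, List.length_drop]; omega
      have hrev' : t.reverse ++ h.reverse = h ++ t := by
        rw [← List.reverse_append, ← hht, hrev, hht]
      have hth : t.reverse = h :=
        (List.append_inj hrev' (by simp [htl, hhl])).1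
      have hsum : (l.map Prod.fst).sum = (h.map Prod.fst).sum + (t.map Prod.fst).sum := by
        rw [hht, List.map_append, List.sum_append]
      have hts : (h.map Prod.fst).sum = (t.map Prod.fst).sum := by
        rw [← hth, List.map_reverse, List.sum_reverse]
      have := hl.2
      omega
    · -- odd length
      set h := l.take k with hhdef
      have hhl : h.length = k := by rw [hhdef, List.length_take]; omega
      rcases hd : l.drop k with _ | ⟨m, t⟩
      · exfalso; have := congrArg List.length hd; simp [List.length_drop] at this; omega
      have hht : l = h ++ m :: t := by rw [hhdef, ← hd, List.take_append_drop]
      have htl : t.length = k := by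
        have := congrArg List.length hht
        simp only [List.length_append, List.length_cons, hhl] at this
        omega
      have hrev' : t.reverse ++ m :: h.reverse = h ++ m :: t := by
        have : l.reverse = t.reverse ++ m :: h.reverse := by
          rw [hht]; simp
        rw [← this, hrev, hht]
      obtain ⟨hth, htail⟩ := List.append_inj hrev' (by simp [htl, hhl])
      rw [List.cons.injEq] at htail
      have hht2 : h.reverse = t := htail.2
      have hmem : m ∈ l := by rw [hht]; exact List.mem_append_right _ (List.mem_cons_self)
      have hm := hl.1 m hmem
      have hsum : (h.map Prod.fst).sum + (m.1 + (t.map Prod.fst).sum) = 2*n+1 := by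
        have := hl.2
        rw [hht, List.map_append, List.sum_append, List.map_cons, List.sum_cons] at this
        exact this
      have hts : (h.map Prod.fst).sum = (t.map Prod.fst).sum := by
        rw [← hht2, List.map_reverse, List.sum_reverse]
      have hjle : (m.1 - 1)/2 < n + 1 := by omega
      have hcle : m.2 - 1 < 2 * ((m.1 - 1)/2) + 1 := by omega
      refine ⟨⟨⟨(m.1 - 1)/2, hjle⟩, ⟨m.2 - 1, hcle⟩, ⟨h, ?_, ?_⟩⟩, ?_⟩
      · exact fun pc hpc => hl.1 pc (by rw [hht]; exact List.mem_append_left _ hpc)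
      · show (h.map Prod.fst).sum = n - (m.1 - 1)/2
        omega
      · have h1 : 2 * ((m.1 - 1)/2) + 1 = m.1 := by omega
        have h2 : m.2 - 1 + 1 = m.2 := by omega
        apply Subtype.ext
        show h ++ (2*((m.1-1)/2)+1, m.2-1+1) :: h.reverse = l
        rw [h1, h2, hht2, Prod.mk.eta, hht]

lemma si_card (n : ℕ) :
    Nat.card {l : List (ℕ × ℕ) // IsNColourComposition (2*n+1) l ∧ l.reverse = l} = gq n := by
  haveI hfin : ∀ j : Fin (n+1), Finite {l : List (ℕ × ℕ) // IsNColourComposition (n - j.1) l} :=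
    fun j => (comp_finite_card (n - j.1)).1
  rw [← Nat.card_eq_of_bijective _ (siCons_bij n), Nat.card_sigma']
  have : ∀ j : Fin (n+1),
      Nat.card (Fin (2*j.1+1) × {l : List (ℕ × ℕ) // IsNColourComposition (n - j.1) l})
      = (2*j.1+1) * fc (n - j.1) := by
    intro j
    rw [Nat.card_prod, Nat.card_eq_fintype_card, Fintype.card_fin, (comp_finite_card (n - j.1)).2]
  rw [Finset.sum_congr rfl (fun j _ => this j)]
  rw [Fin.sum_univ_eq_sum_range (fun j => (2*j+1) * fc (n - j)), gq,
    ← Finset.sum_range_reflect (fun i => (2*(n-i)+1) * fc i) (n+1)]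
  refine Finset.sum_congr rfl fun i hi => ?_
  have hi' := Finset.mem_range.mp hi
  congr 2 <;> omega

theorem selfinverse_odd_generating_function (a : ℕ → ℕ)
    (ha : ∀ n, a n = Nat.card {l : List (ℕ × ℕ) //
        IsNColourComposition (2 * n + 1) l ∧ l.reverse = l}) :
    (1 - 3 * PowerSeries.X + PowerSeries.X ^ 2) *
        PowerSeries.mk (fun n => (a n : ℤ)) = 1 + PowerSeries.X := by
  have hag : ∀ n, a n = gq n := fun n => by rw [ha n, si_card n]
  set A : PowerSeries ℤ := PowerSeries.mk (fun n => (a n : ℤ)) with hA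
  have hexp : (1 - 3 * PowerSeries.X + PowerSeries.X ^ 2) * A
      = A - PowerSeries.C (3:ℤ) * (PowerSeries.X * A)
        + PowerSeries.X * (PowerSeries.X * A) := by
    have : (PowerSeries.C (3:ℤ) : PowerSeries ℤ) = 3 := by
      simp
    rw [this]; ring
  rw [hexp]
  ext n
  rcases n with _ | n
  · simp only [map_add, map_sub, PowerSeries.coeff_zero_X_mul, PowerSeries.coeff_C_mul,
      PowerSeries.coeff_mk, hA]
    have h0 : a 0 = 1 := by rw [hag, gq_zero]
    simp [h0]
  rcases n with _ | n
  · rw [map_add, map_sub, PowerSeries.coeff_C_mul, PowerSeries.coeff_succ_X_mul,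
      PowerSeries.coeff_succ_X_mul, PowerSeries.coeff_zero_X_mul]
    simp only [PowerSeries.coeff_mk, hA]
    have h0 : a 0 = 1 := by rw [hag, gq_zero]
    have h1 : a 1 = 4 := by rw [hag, gq_one]
    rw [h0, h1]
    simp [PowerSeries.coeff_one, PowerSeries.coeff_X]
  · rw [map_add, map_sub, PowerSeries.coeff_C_mul, PowerSeries.coeff_succ_X_mul,
      PowerSeries.coeff_succ_X_mul, PowerSeries.coeff_succ_X_mul]
    simp only [PowerSeries.coeff_mk, hA]
    have hrec := gq_rec n
    have hcast : (a (n+2) : ℤ) + (a n : ℤ) = 3 * (a (n+1) : ℤ) := by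
      rw [hag, hag, hag]
      exact_mod_cast congrArg (fun x : ℕ => (x : ℤ)) hrec
    have hone : (PowerSeries.coeff (n+1+1)) (1 : PowerSeries ℤ) = 0 := by
      simp [PowerSeries.coeff_one]
    have hX : (PowerSeries.coeff (n+1+1)) (PowerSeries.X : PowerSeries ℤ) = 0 := by
      simp [PowerSeries.coeff_X]
    rw [map_add, hone, hX]
    push_cast at hcast ⊢
    linarith
end
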